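/- Let S be an involution semigroup and A ⊆ S. Then the HS-stable involution subsemigroup generated by A equals (⟨A ∪ ⋃_{x∈S} x H_S² x*⟩ω ∩ S²) ∪ ((A ∪ A*) \ S²), where ⟨·⟩ denotes the generated involution subsemigroup. -/

import Mathlib

open Pointwise

/-- The set of hermitian squares of an involution semigroup. -/
def hermSq (S : Type*) [Mul S] [Star S] : Set S := {a | ∃ x : S, a = x * star x}

/-- `T` is an involution subsemigroup. -/
def IsInvSub {S : Type*} [Mul S] [Star S] (T : Set S) : Prop :=
  (∀ x ∈ T, ∀ y ∈ T, x * y ∈ T) ∧ ∀ x ∈ T, star x ∈ T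

/-- `T` is an HS-stable involution subsemigroup. -/
def IsHSStable {S : Type*} [Mul S] [Star S] (T : Set S) : Prop :=
  IsInvSub T ∧ hermSq S ⊆ T ∧
    ∀ h ∈ hermSq S, ∀ x y : S, x * h * y ∈ T → x * y ∈ T

/-- The HS-stable involution subsemigroup generated by `B`. -/
def genHS {S : Type*} [Mul S] [Star S] (B : Set S) : Set S :=
  ⋂₀ {T | IsHSStable T ∧ B ⊆ T}

/-- The involution subsemigroup generated by `B`. -/
def genInv {S : Type*} [Mul S] [Star S] (B : Set S) : Set S :=
  ⋂₀ {T | IsInvSub T ∧ B ⊆ T}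

/-- The closure `Tω`. -/
def omegaCl {S : Type*} [Mul S] (T : Set S) : Set S := {s | ∃ t ∈ T, s * t ∈ T}

/-- `S² = {x y : x, y ∈ S}`. -/
def sqSet (S : Type*) [Mul S] : Set S := {a | ∃ x y : S, a = x * y}

/-- Iterated complex product `A 0 * A 1 * ⋯ * A n`. -/
def pprod {S : Type*} [Mul S] (A : ℕ → Set S) : ℕ → Set S
  | 0 => A 0
  | (k+1) => pprod A k * A (k+1)

/-!
Write `K` for the set of conjugates `x (h h') x*` of products of two hermitian squares,
`G = ⟨A ∪ K⟩` and `W = Gω`. Since `K ⊆ G`, every hermitian square can be inserted into or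
deleted from a product at the cost of changing the witness in `G`, so `W` is itself an
HS-stable involution subsemigroup; cutting it down to `(W ∩ S²) ∪ ((A ∪ A*) \ S²)` keeps
this property and still contains `A`. Conversely an HS-stable `T ⊇ A` contains `K`
(delete `x* x` from `(x a)(x a)* (x b)(x b)*`), hence `G`, and if `x y t, t ∈ G` then
`x (y t)(y t)* y = (x y t) t* (y* y) ∈ T`, so `x y ∈ T`.
-/

open Set

def hermConj (S : Type*) [Mul S] [Star S] : Set S :=
  {a | ∃ x : S, ∃ h ∈ hermSq S, ∃ h' ∈ hermSq S, a = x * (h * h') * star x}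

section Generated

variable {S : Type*} [Mul S] [Star S]

lemma isInvSub_genInv (B : Set S) : IsInvSub (genInv B) :=
  ⟨fun _ hx _ hy => mem_sInter.2 fun T hT =>
      hT.1.1 _ (mem_sInter.1 hx T hT) _ (mem_sInter.1 hy T hT),
    fun _ hx => mem_sInter.2 fun T hT => hT.1.2 _ (mem_sInter.1 hx T hT)⟩

lemma subset_genInv (B : Set S) : B ⊆ genInv B :=
  subset_sInter fun _ hT => hT.2

lemma genInv_subset {B T : Set S} (hT : IsInvSub T) (hBT : B ⊆ T) : genInv B ⊆ T :=
  sInter_subset_of_mem ⟨hT, hBT⟩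

lemma genHS_subset {B T : Set S} (hT : IsHSStable T) (hBT : B ⊆ T) : genHS B ⊆ T :=
  sInter_subset_of_mem ⟨hT, hBT⟩

lemma subset_genHS {B T : Set S} (h : ∀ U, IsHSStable U → B ⊆ U → T ⊆ U) :
    T ⊆ genHS B :=
  subset_sInter fun U hU => h U hU.1 hU.2

lemma IsInvSub.star_image_subset {B T : Set S} (hT : IsInvSub T) (hBT : B ⊆ T) :
    star '' B ⊆ T :=
  image_subset_iff.2 fun b hb => hT.2 b (hBT hb)

lemma subset_omegaCl {G : Set S} (hG : IsInvSub G) : G ⊆ omegaCl G :=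
  fun g hg => ⟨g, hg, hG.1 g hg g hg⟩

end Generated

section StarSemigroup

variable {S : Type*} [Semigroup S] [StarMul S]

lemma mul_star_mem_hermSq (a : S) : a * star a ∈ hermSq S := ⟨a, rfl⟩

lemma star_mul_self_mem_hermSq (a : S) : star a * a ∈ hermSq S :=
  ⟨star a, by rw [star_star]⟩

lemma conj_mem_hermConj (x a b : S) : x * (a * star a * (b * star b)) * star x ∈ hermConj S :=
  ⟨x, _, mul_star_mem_hermSq a, _, mul_star_mem_hermSq b, rfl⟩

lemma star_mem_sqSet {s : S} (hs : s ∈ sqSet S) : star s ∈ sqSet S := by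
  obtain ⟨x, y, rfl⟩ := hs
  exact ⟨star y, star x, star_mul x y⟩

lemma hermSq_subset_sqSet : hermSq S ⊆ sqSet S := by
  rintro _ ⟨a, rfl⟩
  exact ⟨a, star a, rfl⟩

lemma IsHSStable.hermConj_subset {T : Set S} (hT : IsHSStable T) : hermConj S ⊆ T := by
  rintro _ ⟨x, _, ⟨a, rfl⟩, _, ⟨b, rfl⟩, rfl⟩
  have hprod : x * (a * star a) * (star x * x) * (b * star b * star x) ∈ T := by
    convert hT.1.1 _ (hT.2.1 (mul_star_mem_hermSq (x * a))) _
      (hT.2.1 (mul_star_mem_hermSq (x * b))) using 1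
    simp only [star_mul, mul_assoc]
  simpa only [mul_assoc] using hT.2.2 _ (star_mul_self_mem_hermSq x) _ _ hprod

lemma IsHSStable.omegaCl_inter_sqSet_subset {G T : Set S} (hT : IsHSStable T) (hGT : G ⊆ T) :
    omegaCl G ∩ sqSet S ⊆ T := by
  rintro _ ⟨⟨t, ht, hst⟩, x, y, rfl⟩
  have hprod : x * ((y * t) * star (y * t)) * y ∈ T := by
    convert hT.1.1 _ (hT.1.1 _ (hGT hst) _ (hT.1.2 _ (hGT ht))) _
      (hT.2.1 (star_mul_self_mem_hermSq y)) using 1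
    simp only [star_mul, mul_assoc]
  exact hT.2.2 _ (mul_star_mem_hermSq _) x y hprod

lemma IsHSStable.union_diff_sqSet {W B : Set S} (hW : IsHSStable W) (hBW : B ⊆ W)
    (hB : ∀ b ∈ B, star b ∈ B) : IsHSStable ((W ∩ sqSet S) ∪ (B \ sqSet S)) := by
  have hsub : (W ∩ sqSet S) ∪ (B \ sqSet S) ⊆ W :=
    union_subset inter_subset_left (sdiff_subset.trans hBW)
  refine ⟨⟨fun x hx y hy => Or.inl ⟨hW.1.1 x (hsub hx) y (hsub hy), x, y, rfl⟩, ?_⟩,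
    fun h hh => Or.inl ⟨hW.2.1 hh, hermSq_subset_sqSet hh⟩,
    fun h hh x y hxy => Or.inl ⟨hW.2.2 h hh x y (hsub hxy), x, y, rfl⟩⟩
  rintro s (⟨hsW, hsq⟩ | ⟨hsB, hsq⟩)
  · exact Or.inl ⟨hW.1.2 s hsW, star_mem_sqSet hsq⟩
  · refine Or.inr ⟨hB s hsB, fun h => hsq ?_⟩
    simpa only [star_star] using star_mem_sqSet h

section OmegaClosure

variable {G : Set S}

lemma omegaCl_mul_mem (hG : IsInvSub G) (hK : hermConj S ⊆ G) {s₁ s₂ : S}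
    (h₁ : s₁ ∈ omegaCl G) (h₂ : s₂ ∈ omegaCl G) : s₁ * s₂ ∈ omegaCl G := by
  obtain ⟨t₁, ht₁, hst₁⟩ := h₁
  obtain ⟨t₂, ht₂, hst₂⟩ := h₂
  refine ⟨t₂ * star (s₂ * t₂) * t₁ * (star (s₁ * t₁) * (s₁ * t₁)),
    hG.1 _ (hG.1 _ (hG.1 _ ht₂ _ (hG.2 _ hst₂)) _ ht₁) _
      (hG.1 _ (hG.2 _ hst₁) _ hst₁), ?_⟩
  convert hG.1 _ (hK (conj_mem_hermConj s₁ (s₂ * t₂) t₁)) _ hst₁ using 1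
  simp only [star_mul, mul_assoc]

lemma star_mem_omegaCl (hG : IsInvSub G) (hK : hermConj S ⊆ G) {s : S}
    (hs : s ∈ omegaCl G) : star s ∈ omegaCl G := by
  obtain ⟨t, ht, hst⟩ := hs
  refine ⟨s * (t * star t * (t * star t)) * star s * (s * t),
    hG.1 _ (hK (conj_mem_hermConj s t t)) _ hst, ?_⟩
  convert hG.1 _ (hK (conj_mem_hermConj (star s * s) t t)) _ ht using 1
  simp only [star_mul, star_star, mul_assoc]

lemma hermSq_subset_omegaCl (hK : hermConj S ⊆ G) : hermSq S ⊆ omegaCl G := by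
  rintro _ ⟨a, rfl⟩
  -- `a* a` is self-adjoint, so `(a* a)(a* a)` is again a hermitian square
  have hsq : star a * a * (star a * a) ∈ hermSq S :=
    ⟨star a * a, by simp only [star_mul, star_star]⟩
  refine ⟨a * (star a * a * (star a * a)) * star a,
    hK ⟨a, _, star_mul_self_mem_hermSq a, _, star_mul_self_mem_hermSq a, rfl⟩, ?_⟩
  convert hK ⟨a, _, star_mul_self_mem_hermSq a, _, hsq, rfl⟩ using 1
  simp only [mul_assoc]

lemma omegaCl_cancel_hermSq (hG : IsInvSub G) (hK : hermConj S ⊆ G) {h x y : S}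
    (hh : h ∈ hermSq S) (hxy : x * h * y ∈ omegaCl G) : x * y ∈ omegaCl G := by
  obtain ⟨t, ht, hct⟩ := hxy
  obtain ⟨a, rfl⟩ := hh
  refine ⟨t * (star (x * (a * star a) * y * t) * (x * (a * star a) * y * t)),
    hG.1 _ ht _ (hG.1 _ (hG.2 _ hct) _ hct), ?_⟩
  convert hG.1 _ (hK (conj_mem_hermConj x (y * t) a)) _ hct using 1
  simp only [star_mul, star_star, mul_assoc]

lemma isHSStable_omegaCl (hG : IsInvSub G) (hK : hermConj S ⊆ G) : IsHSStable (omegaCl G) :=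
  ⟨⟨fun _ hx _ hy => omegaCl_mul_mem hG hK hx hy, fun _ hx => star_mem_omegaCl hG hK hx⟩,
    hermSq_subset_omegaCl hK, fun _ hh _ _ hxy => omegaCl_cancel_hermSq hG hK hh hxy⟩

end OmegaClosure

end StarSemigroup

theorem stmt14 {S : Type*} [Semigroup S] [StarMul S] (A : Set S) :
    genHS A =
      (omegaCl (genInv (A ∪ {a : S | ∃ x : S, ∃ h ∈ hermSq S, ∃ h' ∈ hermSq S,
          a = x * (h * h') * star x})) ∩ sqSet S) ∪
        ((A ∪ (star ·) '' A) \ sqSet S) := by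
  change genHS A =
    (omegaCl (genInv (A ∪ hermConj S)) ∩ sqSet S) ∪ ((A ∪ star '' A) \ sqSet S)
  set G := genInv (A ∪ hermConj S)
  have hG : IsInvSub G := isInvSub_genInv _
  have hAG : A ⊆ G := subset_union_left.trans (subset_genInv _)
  have hKG : hermConj S ⊆ G := subset_union_right.trans (subset_genInv _)
  refine Subset.antisymm (genHS_subset ?_ ?_) (subset_genHS fun T hT hAT => ?_)
  · refine (isHSStable_omegaCl hG hKG).union_diff_sqSet
      ((union_subset hAG (hG.star_image_subset hAG)).trans (subset_omegaCl hG)) ?_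
    rintro _ (ha | ⟨a, ha, rfl⟩)
    · exact Or.inr ⟨_, ha, rfl⟩
    · exact Or.inl (by rwa [star_star])
  · intro a ha
    by_cases hsq : a ∈ sqSet S
    · exact Or.inl ⟨subset_omegaCl hG (hAG ha), hsq⟩
    · exact Or.inr ⟨Or.inl ha, hsq⟩
  · have hGT : G ⊆ T := genInv_subset hT.1 (union_subset hAT hT.hermConj_subset)
    exact union_subset (hT.omegaCl_inter_sqSet_subset hGT)
      (sdiff_subset.trans (union_subset hAT (hT.1.star_image_subset hAT)))
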